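/- arXiv:2006.06213 — 3 statements merged into one kernel-verified Lean document; each statement's English description precedes it below -/
import Mathlib

section
/- Let α ∈ (0,1) be irrational. If α is badly approximable (i.e., its continued fraction digits are bounded by a constant C), then there is a constant C₁ = 3(C+1) such that for every integer n ≥ 1 and every subinterval I ⊂ [0,1) of length 1/n, there exists an integer j with 1 ≤ j ≤ C₁ n such that the fractional part {jα} lies in I. -/
/-!
Let `q_k` be the denominators of the convergents of `α` and `δ_k = |q_k α - p_k|`. Adding
`q_{k+1}` to an index moves the point `j α` of the circle `ℝ / ℤ` by `δ_{k+1}`, always in the same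
direction, and `δ_k < (a_{k+2} + 1) δ_{k+1}`. Hence if the points `j α`, `0 ≤ j < N`, meet every
arc of length `δ_k`, at most `a_{k+2}` such moves show that the points with
`0 ≤ j < N + a_{k+2} q_{k+1}` meet every arc of length `δ_{k+1}`, and by induction the points with
`0 ≤ j < q_k + q_{k+1}` meet every arc of length `δ_k`. For `q_k ≤ n < q_{k+1}` we have
`δ_k < 1 / q_{k+1} ≤ 1 / n`, and bounded digits give `q_k + q_{k+1} ≤ (C + 2) n`.
-/

/-- Complete quotients of the continued fraction of `α ∈ (0,1)`:
`cfQuot α 0 = 1/α`, and `cfQuot α (k+1) = 1/(cfQuot α k - ⌊cfQuot α k⌋)`.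
The digit `a_{k+1}` is `⌊cfQuot α k⌋`. -/
noncomputable def cfQuot (α : ℝ) : ℕ → ℝ
  | 0 => 1 / α
  | k + 1 => 1 / (cfQuot α k - ⌊cfQuot α k⌋)

/-- The `k`-th continued fraction digit `a_k` of `α ∈ (0,1)`, for `k ≥ 1`. -/
noncomputable def cfDigit (α : ℝ) (k : ℕ) : ℤ := ⌊cfQuot α (k - 1)⌋

/-- Numerators of the convergents: `p_0 = 0`, `p_1 = 1`,
`p_{k+2} = a_{k+2} p_{k+1} + p_k`. -/
noncomputable def cfP (α : ℝ) : ℕ → ℤ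
  | 0 => 0
  | 1 => 1
  | k + 2 => cfDigit α (k + 2) * cfP α (k + 1) + cfP α k

/-- Denominators of the convergents: `q_0 = 1`, `q_1 = a_1`,
`q_{k+2} = a_{k+2} q_{k+1} + q_k`. -/
noncomputable def cfQ (α : ℝ) : ℕ → ℤ
  | 0 => 1
  | 1 => cfDigit α 1
  | k + 2 => cfDigit α (k + 2) * cfQ α (k + 1) + cfQ α k

open Set

section ContinuedFraction

variable {α : ℝ}

theorem irrational_cfQuot (hirr : Irrational α) : ∀ k, Irrational (cfQuot α k)
  | 0 => by simpa [cfQuot] using hirr.inv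
  | k + 1 => by
    simpa [cfQuot] using ((irrational_cfQuot hirr k).sub_intCast ⌊cfQuot α k⌋).inv

theorem fract_cfQuot_pos (hirr : Irrational α) (k : ℕ) : 0 < Int.fract (cfQuot α k) :=
  Int.fract_pos.2 ((irrational_cfQuot hirr k).ne_int _)

theorem cfQuot_succ_mul_fract (hirr : Irrational α) (k : ℕ) :
    cfQuot α (k + 1) * Int.fract (cfQuot α k) = 1 := by
  rw [cfQuot, Int.self_sub_floor, one_div_mul_cancel (fract_cfQuot_pos hirr k).ne']

theorem one_lt_cfQuot (hirr : Irrational α) (h0 : 0 < α) (h1 : α < 1) :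
    ∀ k, 1 < cfQuot α k
  | 0 => by rw [cfQuot, lt_div_iff₀ h0]; linarith
  | k + 1 => by
    rw [cfQuot, Int.self_sub_floor]
    exact one_lt_one_div (fract_cfQuot_pos hirr k) (Int.fract_lt_one _)

theorem one_le_cfDigit (hirr : Irrational α) (h0 : 0 < α) (h1 : α < 1) (k : ℕ) :
    1 ≤ cfDigit α (k + 1) :=
  Int.le_floor.2 (by exact_mod_cast (one_lt_cfQuot hirr h0 h1 k).le)

theorem cfQuot_lt_cfDigit_add_one (k : ℕ) : cfQuot α k < cfDigit α (k + 1) + 1 :=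
  Int.lt_floor_add_one _

theorem cfQ_add_two (k : ℕ) : cfQ α (k + 2) = cfDigit α (k + 2) * cfQ α (k + 1) + cfQ α k := rfl

theorem cfP_add_two (k : ℕ) : cfP α (k + 2) = cfDigit α (k + 2) * cfP α (k + 1) + cfP α k := rfl

theorem one_le_cfQ (hirr : Irrational α) (h0 : 0 < α) (h1 : α < 1) : ∀ k, 1 ≤ cfQ α k
  | 0 => le_rfl
  | 1 => one_le_cfDigit hirr h0 h1 0
  | k + 2 => by
    rw [cfQ_add_two]
    nlinarith [one_le_cfQ hirr h0 h1 (k + 1), one_le_cfQ hirr h0 h1 k,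
      one_le_cfDigit hirr h0 h1 (k + 1)]

theorem cfQ_le_cfQ_succ (hirr : Irrational α) (h0 : 0 < α) (h1 : α < 1) :
    ∀ k, cfQ α k ≤ cfQ α (k + 1)
  | 0 => one_le_cfDigit hirr h0 h1 0
  | k + 1 => by
    rw [cfQ_add_two]
    nlinarith [one_le_cfQ hirr h0 h1 (k + 1), one_le_cfQ hirr h0 h1 k,
      one_le_cfDigit hirr h0 h1 (k + 1)]

theorem le_cfQ (hirr : Irrational α) (h0 : 0 < α) (h1 : α < 1) : ∀ k : ℕ, (k : ℤ) ≤ cfQ α k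
  | 0 => zero_le_one
  | 1 => one_le_cfDigit hirr h0 h1 0
  | k + 2 => by
    have ih : ((k + 1 : ℕ) : ℤ) ≤ cfQ α (k + 1) := le_cfQ hirr h0 h1 (k + 1)
    have : cfQ α (k + 1) ≤ cfDigit α (k + 2) * cfQ α (k + 1) :=
      le_mul_of_one_le_left (by linarith [one_le_cfQ hirr h0 h1 (k + 1)])
        (one_le_cfDigit hirr h0 h1 (k + 1))
    rw [cfQ_add_two]
    push_cast at ih ⊢
    linarith [one_le_cfQ hirr h0 h1 k]

theorem exists_cfQ_le_lt (hirr : Irrational α) (h0 : 0 < α) (h1 : α < 1) {n : ℕ}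
    (hn : 1 ≤ n) : ∃ k, cfQ α k ≤ n ∧ (n : ℤ) < cfQ α (k + 1) := by
  classical
  have hex : ∃ k, (n : ℤ) < cfQ α (k + 1) :=
    ⟨n, by have := le_cfQ hirr h0 h1 (n + 1); push_cast at this; omega⟩
  refine ⟨Nat.find hex, ?_, Nat.find_spec hex⟩
  rcases h : Nat.find hex with _ | m
  · change (1 : ℤ) ≤ n
    exact_mod_cast hn
  · exact not_lt.1 (Nat.find_min hex (h ▸ Nat.lt_succ_self m))

theorem cfQ_succ_le (hirr : Irrational α) (h0 : 0 < α) (h1 : α < 1) {C : ℤ}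
    (hbad : ∀ k : ℕ, 1 ≤ k → cfDigit α k ≤ C) : ∀ k, cfQ α (k + 1) ≤ (C + 1) * cfQ α k
  | 0 => by have := hbad 1 le_rfl; change cfDigit α 1 ≤ (C + 1) * 1; linarith
  | k + 1 => by
    rw [cfQ_add_two]
    nlinarith [hbad (k + 2) (by omega), one_le_cfQ hirr h0 h1 (k + 1),
      cfQ_le_cfQ_succ hirr h0 h1 k]

noncomputable def cfErr (α : ℝ) (k : ℕ) : ℝ := cfQ α k * α - cfP α k

theorem cfErr_zero : cfErr α 0 = α := by simp [cfErr, cfQ, cfP]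

theorem cfErr_one : cfErr α 1 = cfDigit α 1 * α - 1 := by simp [cfErr, cfQ, cfP]

theorem cfErr_add_two (k : ℕ) :
    cfErr α (k + 2) = cfDigit α (k + 2) * cfErr α (k + 1) + cfErr α k := by
  simp only [cfErr, cfQ_add_two, cfP_add_two]
  push_cast
  ring

theorem cfErr_ne_zero (hirr : Irrational α) (h0 : 0 < α) (h1 : α < 1) (k : ℕ) :
    cfErr α k ≠ 0 :=
  sub_ne_zero.2 ((hirr.intCast_mul (by linarith [one_le_cfQ hirr h0 h1 k])).ne_int _)

theorem cfErr_add_cfQuot_mul (hirr : Irrational α) (h0 : 0 < α) :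
    ∀ k, cfErr α k + cfQuot α (k + 1) * cfErr α (k + 1) = 0
  | 0 => by
    have h : cfQuot α 1 * (1 / α - cfDigit α 1) = 1 := cfQuot_succ_mul_fract hirr 0
    field_simp at h
    rw [cfErr_zero, cfErr_one]
    linear_combination -h
  | k + 1 => by
    have ih := cfErr_add_cfQuot_mul hirr h0 k
    have h : cfQuot α (k + 2) * (cfQuot α (k + 1) - cfDigit α (k + 2)) = 1 :=
      cfQuot_succ_mul_fract hirr (k + 1)
    rw [cfErr_add_two]
    linear_combination cfQuot α (k + 2) * ih - cfErr α (k + 1) * h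

theorem abs_cfErr_eq (hirr : Irrational α) (h0 : 0 < α) (h1 : α < 1) (k : ℕ) :
    |cfErr α k| = cfQuot α (k + 1) * |cfErr α (k + 1)| := by
  rw [eq_neg_of_add_eq_zero_left (cfErr_add_cfQuot_mul hirr h0 k), abs_neg, abs_mul,
    abs_of_pos (by linarith [one_lt_cfQuot hirr h0 h1 (k + 1)])]

theorem abs_cfErr_lt (hirr : Irrational α) (h0 : 0 < α) (h1 : α < 1) (k : ℕ) :
    |cfErr α k| < (cfDigit α (k + 2) + 1) * |cfErr α (k + 1)| := by
  rw [abs_cfErr_eq hirr h0 h1 k]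
  exact mul_lt_mul_of_pos_right (cfQuot_lt_cfDigit_add_one (k + 1))
    (abs_pos.2 (cfErr_ne_zero hirr h0 h1 (k + 1)))

theorem one_lt_cfDigit_add_one_mul (h0 : 0 < α) : 1 < (cfDigit α 1 + 1) * α := by
  have h : 1 / α < cfDigit α 1 + 1 := cfQuot_lt_cfDigit_add_one 0
  rwa [div_lt_iff₀ h0] at h

theorem abs_cfErr_eq_add (hirr : Irrational α) (h0 : 0 < α) (h1 : α < 1) (k : ℕ) :
    |cfErr α k| = cfDigit α (k + 2) * |cfErr α (k + 1)| + |cfErr α (k + 2)| := by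
  have h : cfQuot α (k + 2) * (cfQuot α (k + 1) - cfDigit α (k + 2)) = 1 :=
    cfQuot_succ_mul_fract hirr (k + 1)
  linear_combination abs_cfErr_eq hirr h0 h1 k +
    (cfQuot α (k + 1) - cfDigit α (k + 2)) * abs_cfErr_eq hirr h0 h1 (k + 1) +
    |cfErr α (k + 2)| * h

theorem cfQ_succ_mul_abs_cfErr_add (hirr : Irrational α) (h0 : 0 < α) (h1 : α < 1) :
    ∀ k, cfQ α (k + 1) * |cfErr α k| + cfQ α k * |cfErr α (k + 1)| = 1
  | 0 => by
    have h : (cfDigit α 1 : ℝ) ≤ 1 / α := Int.floor_le _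
    rw [le_div_iff₀ h0] at h
    rw [cfErr_zero, cfErr_one, abs_of_pos h0, abs_of_nonpos (by linarith)]
    change (cfDigit α 1 : ℝ) * α + ((1 : ℤ) : ℝ) * _ = 1
    push_cast
    ring
  | k + 1 => by
    rw [cfQ_add_two]
    push_cast
    linear_combination cfQ_succ_mul_abs_cfErr_add hirr h0 h1 k -
      (cfQ α (k + 1) : ℝ) * abs_cfErr_eq_add hirr h0 h1 k

theorem cfQ_succ_mul_abs_cfErr_lt (hirr : Irrational α) (h0 : 0 < α) (h1 : α < 1) (k : ℕ) :
    cfQ α (k + 1) * |cfErr α k| < 1 := by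
  have hq : (0 : ℝ) < cfQ α k := by exact_mod_cast one_le_cfQ hirr h0 h1 k
  have := mul_pos hq (abs_pos.2 (cfErr_ne_zero hirr h0 h1 (k + 1)))
  linarith [cfQ_succ_mul_abs_cfErr_add hirr h0 h1 k]

end ContinuedFraction

/-- Every closed arc of length `δ` of the circle `ℝ / ℤ` contains one of the points `j α`,
`0 ≤ j < N`. -/
def OrbitCovers (α : ℝ) (N : ℤ) (δ : ℝ) : Prop :=
  ∀ y : ℝ, ∃ j i : ℤ, 0 ≤ j ∧ j < N ∧ j * α - i ∈ Icc y (y + δ)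

theorem orbitCovers_one_one (α : ℝ) : OrbitCovers α 1 1 := fun y =>
  ⟨0, -⌈y⌉, le_rfl, one_pos, by
    simp only [Int.cast_zero, zero_mul, Int.cast_neg, sub_neg_eq_add, zero_add, mem_Icc]
    exact ⟨Int.le_ceil y, (Int.ceil_lt_add_one y).le⟩⟩

namespace OrbitCovers

variable {α δ D : ℝ} {N : ℤ}

theorem neg (h : OrbitCovers α N δ) : OrbitCovers (-α) N δ := by
  intro y
  obtain ⟨j, i, hj0, hjN, hlo, hhi⟩ := h (-y - δ)
  refine ⟨j, -i, hj0, hjN, ?_, ?_⟩ <;> push_cast <;> linarith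

/-- Adding `q` to the index moves the point by `δ`; starting from a point of the arc of length `D`
that ends where the target arc ends, fewer than `a + 1` such moves reach the target. -/
theorem refine_of_eq (h : OrbitCovers α N D) {q p a : ℤ} (hq : 0 ≤ q) (hδ : 0 < δ)
    (hqp : q * α - p = δ) (hD : D < (a + 1) * δ) : OrbitCovers α (N + a * q) δ := by
  intro y
  obtain ⟨j, i, hj0, hjN, hlo, hhi⟩ := h (y + δ - D)
  set z := j * α - i
  set m := ⌊(y + δ - z) / δ⌋₊
  have hm_le : (m : ℝ) * δ ≤ y + δ - z :=
    (le_div_iff₀ hδ).1 (Nat.floor_le (div_nonneg (by linarith) hδ.le))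
  have hm_gt : y + δ - z < (m + 1) * δ := (div_lt_iff₀ hδ).1 (Nat.lt_floor_add_one _)
  have hma : (m : ℤ) ≤ a := by
    have : (m : ℝ) < a + 1 := by nlinarith
    exact Int.lt_add_one_iff.1 (by exact_mod_cast this)
  have hpt : ((j + m * q : ℤ) : ℝ) * α - (i + m * p : ℤ) = z + m * δ := by
    rw [← hqp]; push_cast; ring
  refine ⟨j + m * q, i + m * p, by positivity, by nlinarith, ?_⟩
  rw [hpt, mem_Icc]
  constructor <;> linarith

theorem refine (h : OrbitCovers α N D) {q p a : ℤ} (hq : 0 ≤ q) (hδ : 0 < δ)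
    (hqp : |q * α - p| = δ) (hD : D < (a + 1) * δ) : OrbitCovers α (N + a * q) δ := by
  rcases abs_choice ((q : ℝ) * α - p) with hη | hη <;> rw [hη] at hqp
  · exact h.refine_of_eq hq hδ hqp hD
  · simpa using (h.neg.refine_of_eq (p := -p) hq hδ (by push_cast; linarith) hD).neg

theorem exists_fract_mem_Ioo (h : OrbitCovers α N δ) {x ε : ℝ} (hx : 0 ≤ x)
    (hxε : x + ε ≤ 1) (hδ : δ < ε) :
    ∃ j : ℕ, 1 ≤ j ∧ (j : ℤ) < N ∧ Int.fract (j * α) ∈ Ioo x (x + ε) := by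
  obtain ⟨j, i, hj0, hjN, hlo, hhi⟩ := h (x + (ε - δ) / 2)
  lift j to ℕ using hj0
  rw [Int.cast_natCast] at hlo hhi
  have hfract : Int.fract ((j : ℝ) * α) = j * α - i :=
    Int.fract_eq_iff.2 ⟨by linarith, by linarith, i, by ring⟩
  refine ⟨j, Nat.one_le_iff_ne_zero.2 ?_, hjN, ?_⟩
  · rintro rfl
    have : (0 : ℝ) < -i ∧ (-i : ℝ) < 1 := by constructor <;> linarith
    have : (0 : ℤ) < -i ∧ -i < 1 := by exact_mod_cast this
    omega
  · rw [hfract, mem_Ioo]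
    constructor <;> linarith

end OrbitCovers

theorem orbitCovers_cfQ {α : ℝ} (hirr : Irrational α) (h0 : 0 < α) (h1 : α < 1) :
    ∀ k, OrbitCovers α (cfQ α k + cfQ α (k + 1)) |cfErr α k|
  | 0 => by
    have := (orbitCovers_one_one α).refine (q := 1) (p := 0) (a := cfDigit α 1) zero_le_one
      (abs_pos.2 (cfErr_ne_zero hirr h0 h1 0)) (by simp [cfErr_zero])
      (by rw [cfErr_zero, abs_of_pos h0]; exact one_lt_cfDigit_add_one_mul h0)
    convert this using 1
    change 1 + cfDigit α 1 = _
    ring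
  | k + 1 => by
    have := (orbitCovers_cfQ hirr h0 h1 k).refine
      (zero_le_one.trans (one_le_cfQ hirr h0 h1 (k + 1)))
      (abs_pos.2 (cfErr_ne_zero hirr h0 h1 (k + 1))) rfl (abs_cfErr_lt hirr h0 h1 k)
    convert this using 1
    rw [cfQ_add_two]
    ring

/-- If `α ∈ (0,1)` is irrational and badly approximable, with all continued fraction digits
bounded by `C`, then with `C₁ = 3(C+1)`: for every `n ≥ 1` and every subinterval
`[x, x + 1/n) ⊆ [0,1)` of length `1/n`, there exists `1 ≤ j ≤ C₁ n` with `{jα}` in the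
interval. -/
theorem stmt_1 (α : ℝ) (hirr : Irrational α) (h0 : 0 < α) (h1 : α < 1) (C : ℤ)
    (hbad : ∀ k : ℕ, 1 ≤ k → cfDigit α k ≤ C) :
    ∀ n : ℕ, 1 ≤ n → ∀ x : ℝ, 0 ≤ x → x + 1 / n ≤ 1 →
      ∃ j : ℕ, 1 ≤ j ∧ (j : ℤ) ≤ 3 * (C + 1) * n ∧
        Int.fract ((j : ℝ) * α) ∈ Set.Ico x (x + 1 / n) := by
  intro n hn x hx0 hx1
  obtain ⟨k, hqk, hqk1⟩ := exists_cfQ_le_lt hirr h0 h1 hn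
  have hδ : |cfErr α k| < 1 / n := by
    have hn' : (n : ℝ) ≤ cfQ α (k + 1) := by exact_mod_cast hqk1.le
    rw [lt_div_iff₀ (by exact_mod_cast hn)]
    nlinarith [abs_nonneg (cfErr α k), cfQ_succ_mul_abs_cfErr_lt hirr h0 h1 k]
  obtain ⟨j, hj1, hjN, hj⟩ := (orbitCovers_cfQ hirr h0 h1 k).exists_fract_mem_Ioo hx0 hx1 hδ
  refine ⟨j, hj1, ?_, Ioo_subset_Ico_self hj⟩
  have hC : 1 ≤ C := (one_le_cfDigit hirr h0 h1 0).trans (hbad 1 le_rfl)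
  nlinarith [cfQ_succ_le hirr h0 h1 hbad k]
end

section
/- Let m ≥ 1 and let α_1, ..., α_m be real algebraic integers lying in a real algebraic number field of degree m+1 such that 1, α_1, ..., α_m are linearly independent over ℚ. Then there exists a constant C > 0 such that for every nonzero integer vector (n_1, ..., n_m) ∈ ℤ^m, the distance from n_1α_1 + ... + n_mα_m to the nearest integer is at least C / (max_i |n_i|)^m. -/
/-!
For `β = ∑ nᵢ αᵢ - z ∈ K`, a nonzero algebraic integer by linear independence, the norm of `β`
is a nonzero rational integer, so the product of its `m + 1` conjugates is at least `1` in
absolute value. Every other conjugate `σ β` differs from `β` by `∑ nᵢ (σ αᵢ - αᵢ)`, in which `z`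
cancels, so when `|β| < 1` it is `O(max |nᵢ|)`; hence `1 ≤ |β| · O(max |nᵢ|)^m`.
-/

open Finset

theorem norm_map_sub_map_le {R F : Type*} [Ring R] [FunLike F R ℂ] [RingHomClass F R ℂ]
    {ι : Type*} [Fintype ι] (σ τ : F) (a : ι → R) (n : ι → ℤ) (z : ℤ) {N : ℝ}
    (hN : ∀ i, |(n i : ℝ)| ≤ N) :
    ‖σ (∑ i, n i * a i - z) - τ (∑ i, n i * a i - z)‖ ≤ N * ∑ i, ‖σ (a i) - τ (a i)‖ := by
  have hdiff : σ (∑ i, n i * a i - z) - τ (∑ i, n i * a i - z) =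
      ∑ i, n i * (σ (a i) - τ (a i)) := by
    simp only [map_sub, map_sum, map_mul, map_intCast, mul_sub, sum_sub_distrib]
    ring
  rw [hdiff, mul_sum]
  refine (norm_sum_le _ _).trans (sum_le_sum fun i _ => ?_)
  rw [norm_mul, Complex.norm_intCast]
  exact mul_le_mul_of_nonneg_right (hN i) (norm_nonneg _)

section Embeddings

variable {K : Type*} [Field K] [Algebra ℚ K] [FiniteDimensional ℚ K]

theorem one_le_abs_norm_of_isIntegral {β : K} (hβ : IsIntegral ℤ β) (h0 : β ≠ 0) :
    1 ≤ |Algebra.norm ℚ β| := by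
  obtain ⟨r, hr⟩ := IsIntegrallyClosed.isIntegral_iff.mp (Algebra.isIntegral_norm ℚ hβ)
  have hr0 : r ≠ 0 := by
    rintro rfl
    exact h0 (by simpa using hr.symm)
  rw [← hr, algebraMap_int_eq, eq_intCast, ← Int.cast_abs]
  exact_mod_cast Int.one_le_abs hr0

theorem one_le_prod_norm_embeddings {β : K} (hβ : IsIntegral ℤ β) (h0 : β ≠ 0) :
    1 ≤ ∏ σ : K →ₐ[ℚ] ℂ, ‖σ β‖ := by
  rw [← norm_prod, ← Algebra.norm_eq_prod_embeddings ℚ ℂ β, eq_ratCast, Complex.norm_ratCast]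
  exact_mod_cast one_le_abs_norm_of_isIntegral hβ h0

theorem one_le_norm_mul_pow_of_norm_le {β : K} (hβ : IsIntegral ℤ β) (h0 : β ≠ 0)
    (σ₀ : K →ₐ[ℚ] ℂ) {M : ℝ} (hM : ∀ σ, σ ≠ σ₀ → ‖σ β‖ ≤ M) :
    1 ≤ ‖σ₀ β‖ * M ^ (Module.finrank ℚ K - 1) := by
  classical
  have hcard : #(univ.erase σ₀) = Module.finrank ℚ K - 1 := by
    rw [card_erase_of_mem (mem_univ σ₀), card_univ, AlgHom.card ℚ K ℂ]
  calc 1 ≤ ∏ σ : K →ₐ[ℚ] ℂ, ‖σ β‖ := one_le_prod_norm_embeddings hβ h0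
    _ = ‖σ₀ β‖ * ∏ σ ∈ univ.erase σ₀, ‖σ β‖ := (mul_prod_erase _ _ (mem_univ σ₀)).symm
    _ ≤ ‖σ₀ β‖ * M ^ (Module.finrank ℚ K - 1) := by
      gcongr
      rw [← hcard, ← prod_const]
      exact prod_le_prod (fun _ _ => norm_nonneg _) fun σ hσ => hM σ (ne_of_mem_erase hσ)

theorem exists_pos_le_norm_mul_pow (σ₀ : K →ₐ[ℚ] ℂ) {ι : Type*} [Fintype ι] {a : ι → K}
    (ha : ∀ i, IsIntegral ℤ (a i)) :
    ∃ C : ℝ, 0 < C ∧ ∀ (n : ι → ℤ) (z : ℤ) (N : ℝ), 1 ≤ N → (∀ i, |(n i : ℝ)| ≤ N) →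
      ∑ i, n i * a i - z ≠ 0 →
        C ≤ ‖σ₀ (∑ i, n i * a i - z)‖ * N ^ (Module.finrank ℚ K - 1) := by
  set A := ∑ σ : K →ₐ[ℚ] ℂ, ∑ i, ‖σ (a i) - σ₀ (a i)‖
  have hA : 0 ≤ A := by positivity
  refine ⟨((1 + A) ^ (Module.finrank ℚ K - 1))⁻¹, by positivity, ?_⟩
  intro n z N hN hnN hβ0
  set β := ∑ i, n i * a i - z
  have hβ : IsIntegral ℤ β :=
    .sub (.sum _ fun i _ => .mul (isIntegral_intCast _) (ha i)) (isIntegral_intCast _)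
  rcases le_or_gt 1 ‖σ₀ β‖ with hbig | hsmall
  · calc ((1 + A) ^ (Module.finrank ℚ K - 1))⁻¹ ≤ 1 :=
          inv_le_one_of_one_le₀ (one_le_pow₀ (by linarith))
      _ ≤ ‖σ₀ β‖ * N ^ (Module.finrank ℚ K - 1) :=
          one_le_mul_of_one_le_of_one_le hbig (one_le_pow₀ hN)
  · have hconj : ∀ σ, σ ≠ σ₀ → ‖σ β‖ ≤ (1 + A) * N := fun σ _ => by
      have hσ : ∑ i, ‖σ (a i) - σ₀ (a i)‖ ≤ A :=
        single_le_sum (f := fun σ : K →ₐ[ℚ] ℂ => ∑ i, ‖σ (a i) - σ₀ (a i)‖)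
          (fun _ _ => by positivity) (mem_univ σ)
      calc ‖σ β‖ ≤ ‖σ₀ β‖ + ‖σ β - σ₀ β‖ := norm_le_norm_add_norm_sub' _ _
        _ ≤ N + N * A := add_le_add (hsmall.le.trans hN)
          ((norm_map_sub_map_le σ σ₀ a n z hnN).trans (by gcongr))
        _ = (1 + A) * N := by ring
    have key := one_le_norm_mul_pow_of_norm_le hβ hβ0 σ₀ hconj
    rw [mul_pow, ← mul_assoc, mul_comm _ ((1 + A) ^ _), mul_assoc] at key
    rwa [inv_le_iff_one_le_mul₀' (by positivity)]

end Embeddings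

theorem sum_intCast_mul_sub_intCast_ne_zero {R : Type*} [Ring R] [Algebra ℚ R] {m : ℕ}
    {α : Fin m → R} (hli : LinearIndependent ℚ (Fin.cons (1 : R) α : Fin (m + 1) → R))
    {n : Fin m → ℤ} (hn : n ≠ 0) (z : ℤ) : ∑ i, (n i : R) * α i - z ≠ 0 := by
  intro h
  have hrel : ∑ j, (Fin.cons (-(z : ℚ)) (fun i => (n i : ℚ)) : Fin (m + 1) → ℚ) j •
      (Fin.cons (1 : R) α : Fin (m + 1) → R) j = 0 := by
    simp only [Fin.sum_univ_succ, Fin.cons_zero, Fin.cons_succ, neg_smul,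
      Int.cast_smul_eq_zsmul, zsmul_eq_mul, mul_one]
    rw [neg_add_eq_sub]
    exact h
  apply hn
  funext i
  simpa using Fintype.linearIndependent_iff.mp hli _ hrel i.succ

theorem stmt_4_general (m : ℕ) (K : Subfield ℝ)
    (hfin : FiniteDimensional ℚ K) (hdeg : Module.finrank ℚ K = m + 1)
    (α : Fin m → ℝ) (hmem : ∀ i, α i ∈ K) (hint : ∀ i, IsIntegral ℤ (α i))
    (hli : LinearIndependent ℚ (Fin.cons (1 : ℝ) α : Fin (m + 1) → ℝ)) :
    ∃ C : ℝ, 0 < C ∧ ∀ n : Fin m → ℤ, n ≠ 0 → ∀ z : ℤ,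
      C / ((Finset.univ.sup fun i => (n i).natAbs : ℕ) : ℝ) ^ m ≤
        |(∑ i, (n i : ℝ) * α i) - (z : ℝ)| := by
  set a : Fin m → K := fun i => ⟨α i, hmem i⟩
  have ha i : IsIntegral ℤ (a i) := (isIntegral_algebraMap_iff K.subtype.injective).mp (hint i)
  set σ₀ : K →ₐ[ℚ] ℂ := (Complex.ofRealHom.comp K.subtype).toRatAlgHom
  obtain ⟨C, hC, hbound⟩ := exists_pos_le_norm_mul_pow σ₀ ha
  refine ⟨C, hC, fun n hn z => ?_⟩
  set N : ℕ := univ.sup fun i => (n i).natAbs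
  have hN : 1 ≤ (N : ℝ) := by
    obtain ⟨i, hi⟩ := Function.ne_iff.mp hn
    exact_mod_cast (Int.natAbs_pos.mpr hi).trans_le
      (le_sup (f := fun i => (n i).natAbs) (mem_univ i))
  have hnN i : |(n i : ℝ)| ≤ N := by
    rw [← Int.cast_abs, Int.abs_eq_natAbs]
    exact_mod_cast le_sup (f := fun i => (n i).natAbs) (mem_univ i)
  have hσ₀ : σ₀ (∑ i, n i * a i - z) = ((∑ i, (n i : ℝ) * α i - z : ℝ) : ℂ) := by
    simp [σ₀, a]
  have hβ0 : ∑ i, (n i : K) * a i - z ≠ 0 := fun h =>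
    sum_intCast_mul_sub_intCast_ne_zero hli hn z
      (Complex.ofReal_eq_zero.mp (by rw [← hσ₀, h, map_zero]))
  have hC' := hbound n z N hN hnN hβ0
  rw [hσ₀, Complex.norm_real, Real.norm_eq_abs, hdeg, Nat.add_sub_cancel] at hC'
  rwa [div_le_iff₀ (by positivity)]

/-- Let `α₁, …, α_m` be real algebraic integers lying in a real algebraic number field `K` of
degree `m+1` such that `1, α₁, …, α_m` are linearly independent over `ℚ`. Then there is a
constant `C > 0` such that for every nonzero integer vector `(n₁, …, n_m)`, the distance from
`n₁α₁ + ⋯ + n_mα_m` to every integer is at least `C / (max_i |n_i|)^m`. -/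
theorem stmt_4 (m : ℕ) (hm : 1 ≤ m) (K : Subfield ℝ)
    (hfin : FiniteDimensional ℚ K) (hdeg : Module.finrank ℚ K = m + 1)
    (α : Fin m → ℝ) (hmem : ∀ i, α i ∈ K) (hint : ∀ i, IsIntegral ℤ (α i))
    (hli : LinearIndependent ℚ (Fin.cons (1 : ℝ) α : Fin (m + 1) → ℝ)) :
    ∃ C : ℝ, 0 < C ∧ ∀ n : Fin m → ℤ, n ≠ 0 → ∀ z : ℤ,
      C / ((Finset.univ.sup fun i => (n i).natAbs : ℕ) : ℝ) ^ m ≤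
        |(∑ i, (n i : ℝ) * α i) - (z : ℝ)| :=
  stmt_4_general m K hfin hdeg α hmem hint hli
end

section
/- Let d ≥ 1 and suppose a continuous curve C in the unit cube [0,1)^d gets within distance 1/(6n) of every point of the cube, where n ≥ 2 is an integer. Then the length of C is at least (n^d - 1)·(2/(3n)). -/
/-!
The subcubes of side `1/n` of the unit cube have centers at mutual distance at least `1/n`.
A curve passing within `1/(6n)` of each of the `n^d` centers therefore visits `n^d` points whose
images are pairwise `2/(3n)` apart; ordering these times increasingly, each of the `n^d - 1`
consecutive steps contributes at least `2/(3n)` to the total variation.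
-/

open scoped ENNReal

theorem card_sub_one_mul_le_eVariationOn {α E ι : Type*} [LinearOrder α] [PseudoEMetricSpace E]
    [Fintype ι] (f : α → E) {s : Set α} (t : ι → α) (hts : ∀ i, t i ∈ s) {δ : ℝ≥0∞}
    (hsep : ∀ i j, i ≠ j → δ ≤ edist (f (t i)) (f (t j))) :
    ((Fintype.card ι - 1 : ℕ) : ℝ≥0∞) * δ ≤ eVariationOn f s := by
  set N := Fintype.card ι
  obtain hN | hN := N.eq_zero_or_pos
  · simp [hN]
  let e := (Fintype.equivFin ι).symm
  let σ := Tuple.sort (t ∘ e)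
  -- clamped at the last index so that `u` is monotone on all of `ℕ`
  let u : ℕ → α := fun j => t (e (σ ⟨min j (N - 1), by omega⟩))
  have hu : Monotone u := fun a b hab =>
    Tuple.monotone_sort (t ∘ e) (by simp only [Fin.mk_le_mk]; omega)
  calc ((N - 1 : ℕ) : ℝ≥0∞) * δ = ∑ _i ∈ Finset.range (N - 1), δ := by simp
    _ ≤ ∑ i ∈ Finset.range (N - 1), edist (f (u (i + 1))) (f (u i)) := by
      refine Finset.sum_le_sum fun i hi => hsep _ _ fun h => ?_
      have := congrArg Fin.val (σ.injective (e.injective h))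
      simp only [Finset.mem_range] at hi this
      omega
    _ ≤ eVariationOn f s := eVariationOn.sum_le hu fun _ => hts _

noncomputable def cubeCenter {d : ℕ} (n : ℕ) (c : Fin d → Fin n) : EuclideanSpace ℝ (Fin d) :=
  WithLp.toLp 2 fun i => ((c i : ℝ) + 1 / 2) / n

theorem cubeCenter_mem_Ico {d n : ℕ} (c : Fin d → Fin n) (i : Fin d) :
    cubeCenter n c i ∈ Set.Ico (0 : ℝ) 1 := by
  have hc : (c i : ℝ) + 1 ≤ n := by exact_mod_cast (c i).isLt
  have hn : (0 : ℝ) < n := by exact_mod_cast (c i).pos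
  simp only [cubeCenter, PiLp.toLp_apply, Set.mem_Ico, div_lt_one hn]
  constructor
  · positivity
  · linarith

theorem inv_le_dist_cubeCenter {d n : ℕ} {c c' : Fin d → Fin n} (h : c ≠ c') :
    1 / (n : ℝ) ≤ dist (cubeCenter n c) (cubeCenter n c') := by
  obtain ⟨i, hi⟩ := Function.ne_iff.mp h
  have hn : (0 : ℝ) < n := by exact_mod_cast (c i).pos
  have hcoord : 1 ≤ |(c i : ℝ) - c' i| := by
    have : ((c i : ℤ) - c' i) ≠ 0 := sub_ne_zero.mpr (by exact_mod_cast Fin.val_ne_of_ne hi)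
    exact_mod_cast Int.one_le_abs this
  calc 1 / (n : ℝ) ≤ |(c i : ℝ) - c' i| / n := by gcongr
    _ = dist (cubeCenter n c i) (cubeCenter n c' i) := by
      rw [Real.dist_eq, cubeCenter, cubeCenter, ← sub_div, abs_div, abs_of_pos hn]
      ring_nf
    _ ≤ dist (cubeCenter n c) (cubeCenter n c') := PiLp.dist_apply_le _ _ _

theorem stmt_5_general (d n : ℕ) (f : ℝ → EuclideanSpace ℝ (Fin d))
    (hclose : ∀ P : EuclideanSpace ℝ (Fin d), (∀ i, P i ∈ Set.Ico (0 : ℝ) 1) →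
      ∃ t ∈ Set.Icc (0 : ℝ) 1, dist (f t) P ≤ 1 / (6 * n)) :
    ENNReal.ofReal (((n : ℝ) ^ d - 1) * (2 / (3 * n))) ≤ eVariationOn f (Set.Icc 0 1) := by
  obtain rfl | hn := n.eq_zero_or_pos
  · simp
  choose t ht hft using fun c : Fin d → Fin n => hclose (cubeCenter n c) (cubeCenter_mem_Ico c)
  have hsep : ∀ c c', c ≠ c' → ENNReal.ofReal (2 / (3 * n)) ≤ edist (f (t c)) (f (t c')) := by
    intro c c' h
    rw [edist_dist]
    refine ENNReal.ofReal_le_ofReal ?_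
    have := dist_triangle4 (cubeCenter n c) (f (t c)) (f (t c')) (cubeCenter n c')
    have hr : 2 / (3 * n : ℝ) = 1 / n - 2 * (1 / (6 * n)) := by field_simp; ring
    linarith [inv_le_dist_cubeCenter h, hft c, hft c', dist_comm (cubeCenter n c) (f (t c))]
  have hcard :
      ((Fintype.card (Fin d → Fin n) - 1 : ℕ) : ℝ≥0∞) = ENNReal.ofReal ((n : ℝ) ^ d - 1) := by
    rw [← ENNReal.ofReal_natCast]
    simp [Nat.cast_sub (Nat.one_le_pow _ _ hn)]
  calc ENNReal.ofReal (((n : ℝ) ^ d - 1) * (2 / (3 * n)))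
      = ((Fintype.card (Fin d → Fin n) - 1 : ℕ) : ℝ≥0∞) * ENNReal.ofReal (2 / (3 * n)) := by
        rw [hcard, ENNReal.ofReal_mul (sub_nonneg.mpr (one_le_pow₀ (by exact_mod_cast hn)))]
    _ ≤ _ := card_sub_one_mul_le_eVariationOn f t ht hsep

/-- If a continuous curve in the unit cube `[0,1)^d` gets within distance `1/(6n)` of every
point of the cube (`n ≥ 2`), then its length (total variation) is at least
`(n^d - 1)·(2/(3n))`. -/
theorem stmt_5 (d n : ℕ) (hd : 1 ≤ d) (hn : 2 ≤ n)
    (f : ℝ → EuclideanSpace ℝ (Fin d)) (hcont : ContinuousOn f (Set.Icc 0 1))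
    (hcube : ∀ t ∈ Set.Icc (0 : ℝ) 1, ∀ i, f t i ∈ Set.Ico (0 : ℝ) 1)
    (hclose : ∀ P : EuclideanSpace ℝ (Fin d), (∀ i, P i ∈ Set.Ico (0 : ℝ) 1) →
      ∃ t ∈ Set.Icc (0 : ℝ) 1, dist (f t) P ≤ 1 / (6 * n)) :
    ENNReal.ofReal (((n : ℝ) ^ d - 1) * (2 / (3 * n))) ≤ eVariationOn f (Set.Icc 0 1) :=
  stmt_5_general d n f hclose
end
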